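/- arXiv:math/0502019 — 2 statements merged into one kernel-verified Lean document; each statement's English description precedes it below -/
import Mathlib

section
/- Let q be a real number with 0 < q < 1, let w₁ > 0 be real, let f be a positive integer and χ a nontrivial complex Dirichlet character modulo f. Then for every integer n ≥ 1, the generalized Barnes-type Changhee q-Bernoulli number satisfies β_{n,χ}(q|w₁) = [f]_q^{n−1} · Σ_{a=0}^{f−1} χ(a) · β_n( a·w₁/f : q^f | w₁ ), where on the right the Barnes-type Changhee q-Bernoulli polynomial is formed with q replaced by q^f. -/
/-!
Since `χ` is nontrivial, `χ 0 = 0`, so the sum defining `β_{n,χ}` may start at `m = 0`.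
Splitting `m = a + f l` by residue classes, the periodicity of `χ`, the identity
`q^{w₁ m} = (q^f)^{w₁ l + a w₁ / f}` and the multiplicativity `[x z]_q = [x]_q [z]_{q^x}` turn
the class of `a` into `[f]_q^{n-1}` times the series in `β_n(a w₁/f : q^f | w₁)`. The constant
term of `β_n` does not depend on `a`, so it is annihilated by `∑_a χ a = 0`.
-/

open Finset

/-- The q-analogue `[z]_q = (1 - q^z)/(1 - q)` for a real exponent `z`. -/
noncomputable def qn (q z : ℝ) : ℝ := (1 - q ^ z) / (1 - q)

/-- The Barnes-type Changhee q-Bernoulli polynomial `β_n(w:q|w₁)`: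
`β_0(w:q|w₁) = (q-1)/log q` and, for `n ≥ 1`,
`β_n(w:q|w₁) = ((q-1)/log q)·(1-q)^{-n} - n·w₁·Σ_{m≥0} q^{w₁m+w}·[w₁m+w]_q^{n-1}`. -/
noncomputable def qBw (q w w1 : ℝ) : ℕ → ℝ
  | 0 => (q - 1) / Real.log q
  | n + 1 => (q - 1) / Real.log q * ((1 - q) ^ (n + 1))⁻¹
      - ((n : ℝ) + 1) * w1 * ∑' m : ℕ, q ^ (w1 * (m : ℝ) + w) * qn q (w1 * (m : ℝ) + w) ^ n

lemma ZMod.sum_val_eq_sum_range {M : Type*} [AddCommMonoid M] (N : ℕ) [NeZero N] (g : ℕ → M) :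
    ∑ j : ZMod N, g j.val = ∑ a ∈ range N, g a := by
  obtain ⟨N, rfl⟩ := Nat.exists_eq_succ_of_ne_zero (NeZero.ne N)
  exact Fin.sum_univ_eq_sum_range g (N + 1)

lemma tsum_eq_sum_range_tsum_add_mul {R : Type*} [AddCommGroup R] [UniformSpace R]
    [IsUniformAddGroup R] [CompleteSpace R] [T0Space R] {g : ℕ → R} (hg : Summable g)
    (N : ℕ) [NeZero N] :
    ∑' n, g n = ∑ a ∈ range N, ∑' m, g (a + N * m) := by
  rw [Nat.sumByResidueClasses hg N, ZMod.sum_val_eq_sum_range N fun a ↦ ∑' m, g (a + N * m)]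

lemma sum_range_natCast_succ {M : Type*} [AddCommGroup M] (N : ℕ) (g : ZMod N → M) :
    ∑ a ∈ range N, g ((a + 1 : ℕ) : ZMod N) = ∑ a ∈ range N, g a := by
  have h := (sum_range_succ' (fun a : ℕ ↦ g a) N).symm.trans (sum_range_succ _ N)
  rwa [ZMod.natCast_self, Nat.cast_zero, add_left_inj] at h

namespace DirichletCharacter

variable {N : ℕ} (χ : DirichletCharacter ℂ N)

lemma summable_mul {g : ℕ → ℂ} (hg : Summable fun m ↦ ‖g m‖) :
    Summable fun m : ℕ ↦ χ m * g m :=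
  hg.of_norm_bounded fun m ↦ by
    rw [norm_mul]; exact mul_le_of_le_one_left (norm_nonneg _) (χ.norm_le_one _)

lemma tsum_mul_eq_sum_range [NeZero N] {g : ℕ → ℂ} (hg : Summable fun m ↦ ‖g m‖) :
    ∑' m : ℕ, χ m * g m = ∑ a ∈ range N, χ a * ∑' l, g (a + N * l) := by
  rw [tsum_eq_sum_range_tsum_add_mul (χ.summable_mul hg) N]
  refine sum_congr rfl fun a _ ↦ ?_
  rw [← tsum_mul_left]
  congr! 2 with l
  simp only [Nat.cast_add, Nat.cast_mul, ZMod.natCast_self, zero_mul, add_zero]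

lemma map_zero_of_sum_range_eq_zero (hχ : ∑ a ∈ range N, χ a = 0) : χ 0 = 0 := by
  rcases eq_or_ne N 1 with rfl | hN
  · simpa using hχ
  · exact χ.map_zero' hN

end DirichletCharacter

lemma qn_nonneg {q z : ℝ} (hq0 : 0 ≤ q) (hq1 : q < 1) (hz : 0 ≤ z) : 0 ≤ qn q z :=
  div_nonneg (sub_nonneg.2 (Real.rpow_le_one hq0 hq1.le hz)) (sub_pos.2 hq1).le

lemma qn_le_inv_one_sub {q z : ℝ} (hq0 : 0 ≤ q) (hq1 : q < 1) : qn q z ≤ (1 - q)⁻¹ := by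
  rw [qn, div_eq_mul_inv]
  exact mul_le_of_le_one_left (inv_nonneg.2 (sub_pos.2 hq1).le)
    (sub_le_self _ (Real.rpow_nonneg hq0 z))

lemma qn_mul_qn_rpow {q x : ℝ} (hq : 0 ≤ q) (hx : q ^ x ≠ 1) (z : ℝ) :
    qn q x * qn (q ^ x) z = qn q (x * z) := by
  rw [qn, qn, qn, Real.rpow_mul hq, div_mul_div_comm, mul_comm (1 - q), ← div_div,
    mul_div_cancel_left₀ _ (sub_ne_zero.2 hx.symm)]

noncomputable def qBernoulliSummand (q : ℝ) (k : ℕ) (z : ℝ) : ℝ := q ^ z * qn q z ^ k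

noncomputable def qBernoulliConst (q : ℝ) (k : ℕ) : ℝ :=
  (q - 1) / Real.log q * ((1 - q) ^ (k + 1))⁻¹

lemma qBw_succ (q w w1 : ℝ) (k : ℕ) :
    qBw q w w1 (k + 1) = qBernoulliConst q k
      - ((k : ℝ) + 1) * w1 * ∑' m : ℕ, qBernoulliSummand q k (w1 * m + w) :=
  rfl

lemma qn_pow_mul_qBernoulliSummand_rpow {q x : ℝ} (hq : 0 ≤ q) (hx : q ^ x ≠ 1) (k : ℕ)
    (z : ℝ) : qn q x ^ k * qBernoulliSummand (q ^ x) k z = qBernoulliSummand q k (x * z) := by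
  rw [qBernoulliSummand, qBernoulliSummand, ← Real.rpow_mul hq, ← qn_mul_qn_rpow hq hx, mul_pow]
  ring

lemma summable_norm_qBernoulliSummand {q w1 : ℝ} (hq0 : 0 ≤ q) (hq1 : q < 1) (hw1 : 0 < w1)
    (k : ℕ) : Summable fun m : ℕ ↦ ‖qBernoulliSummand q k (w1 * m)‖ := by
  refine .of_nonneg_of_le (fun _ ↦ norm_nonneg _) (fun m ↦ ?_)
    ((summable_geometric_of_lt_one (Real.rpow_nonneg hq0 w1)
      (Real.rpow_lt_one hq0 hq1 hw1)).mul_left ((1 - q)⁻¹ ^ k))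
  have hqn := qn_nonneg hq0 hq1 (by positivity : 0 ≤ w1 * m)
  rw [qBernoulliSummand, Real.rpow_mul hq0, Real.rpow_natCast,
    Real.norm_of_nonneg (by positivity), mul_comm]
  gcongr
  exact qn_le_inv_one_sub hq0 hq1

lemma qn_pow_mul_tsum_qBernoulliSummand_pow {q w1 : ℝ} (hq : 0 ≤ q) {N : ℕ}
    (hqN : q ^ N ≠ 1) (hN : N ≠ 0) (k a : ℕ) :
    qn q N ^ k * ∑' m : ℕ, qBernoulliSummand (q ^ N) k (w1 * m + a * w1 / N)
      = ∑' m : ℕ, qBernoulliSummand q k (w1 * ↑(a + N * m)) := by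
  have hscale := qn_pow_mul_qBernoulliSummand_rpow hq (x := N) (by rwa [Real.rpow_natCast]) k
  rw [Real.rpow_natCast] at hscale
  rw [← tsum_mul_left]
  refine tsum_congr fun m ↦ ?_
  rw [hscale]
  congr 1
  push_cast
  field_simp
  ring

/-- Distribution relation for the generalized Barnes-type Changhee q-Bernoulli numbers
attached to a nontrivial Dirichlet character `χ` mod `f`:
`β_{n,χ}(q|w₁) = [f]_q^{n-1} · Σ_{a=0}^{f-1} χ(a) · β_n(a·w₁/f : q^f | w₁)`, where
`β_{n,χ}(q|w₁) = -n·w₁·Σ_{m≥1} χ(m)·q^{w₁m}·[w₁m]_q^{n-1}`. -/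
theorem generalized_Changhee_qBernoulli_distribution (q : ℝ) (hq0 : 0 < q) (hq1 : q < 1)
    (w1 : ℝ) (hw1 : 0 < w1) (f : ℕ) (hf : 0 < f) (χ : DirichletCharacter ℂ f)
    (hχ : ∑ a ∈ range f, χ ((a + 1 : ℕ) : ZMod f) = 0)
    (n : ℕ) (hn : 1 ≤ n) :
    -(n : ℂ) * (w1 : ℂ) * ∑' m : ℕ, χ ((m + 1 : ℕ) : ZMod f)
        * ((q ^ (w1 * ((m : ℝ) + 1)) : ℝ) : ℂ)
        * ((qn q (w1 * ((m : ℝ) + 1)) ^ (n - 1) : ℝ) : ℂ)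
      = ((qn q (f : ℝ) ^ (n - 1) : ℝ) : ℂ)
        * ∑ a ∈ range f, χ (a : ZMod f)
          * ((qBw (q ^ f) ((a : ℝ) * w1 / (f : ℝ)) w1 n : ℝ) : ℂ) := by
  obtain ⟨k, rfl⟩ := Nat.exists_eq_add_of_le' hn
  have : NeZero f := ⟨hf.ne'⟩
  rw [sum_range_natCast_succ f χ] at hχ
  have hsum : Summable fun m : ℕ ↦ ‖(qBernoulliSummand q k (w1 * m) : ℂ)‖ := by
    simpa only [Complex.norm_real] using summable_norm_qBernoulliSummand hq0.le hq1 hw1 k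
  have hqf : q ^ f ≠ 1 := (pow_lt_one₀ hq0.le hq1 hf.ne').ne
  calc _ = -((k : ℂ) + 1) * w1 * ∑' m : ℕ, χ m * (qBernoulliSummand q k (w1 * m) : ℂ) := by
        rw [(χ.summable_mul hsum).tsum_eq_zero_add, Nat.cast_zero,
          χ.map_zero_of_sum_range_eq_zero hχ]
        push_cast [qBernoulliSummand]
        ring_nf
    _ = ∑ a ∈ range f, (χ a * ((qn q f ^ k * qBernoulliConst (q ^ f) k : ℝ) : ℂ)
          + -((k : ℂ) + 1) * w1
            * (χ a * ∑' m, (qBernoulliSummand q k (w1 * ↑(a + f * m)) : ℂ))) := by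
        rw [sum_add_distrib, ← sum_mul, hχ, zero_mul, zero_add, ← mul_sum,
          χ.tsum_mul_eq_sum_range hsum]
    _ = _ := by
        rw [Nat.add_sub_cancel, mul_sum]
        refine sum_congr rfl fun a _ ↦ ?_
        rw [qBw_succ, ← Complex.ofReal_tsum,
          ← qn_pow_mul_tsum_qBernoulliSummand_pow hq0.le hqf hf.ne']
        push_cast
        ring
end

section
/- Let q be a real number with 0 < q < 1, let w₁ > 0 and w ≥ 0 be reals, and let u be a complex number with |u| < 1. Then for every integer n ≥ 0, (1−u) · Σ_{m=0}^{∞} u^m · [w + w₁m]_q^{n} = Σ_{l=0}^{n} C(n,l) · [w]_q^{n−l} · q^{w·l} · H_l(u^{−1} : q | w₁); that is, the Euler–Barnes type Daehee q-Euler polynomials satisfy H_n(u^{−1}, w : q | w₁) = Σ_{l=0}^{n} C(n,l) · [w]_q^{n−l} · q^{w·l} · H_l(u^{−1} : q | w₁). -/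
/-!
Since `q^(w + w₁m) = q^w · (q^w₁)^m`, one has `[w + w₁m]_q = [w]_q + q^w · [w₁m]_q`, so the
binomial theorem reduces the claim to the case `w = 0`, i.e. to
`H_l(u⁻¹ : q | w₁) = (1 - u) Σ_m u^m [w₁m]_q^l`. For that, expand
`[w₁m]_q^l = (1 - q)^(-l) (1 - (q^w₁)^m)^l` binomially: each term is a geometric series in
`q^(w₁j) u`, which sums to `1 / (1 - q^(w₁j) u)`.
-/

open Finset

/-- The Euler–Barnes type Daehee q-Euler number
`H_l(u⁻¹:q|w₁) = (1-u)·(1-q)^{-l}·Σ_{j=0}^{l} C(l,j)·(-1)^j/(1 - q^{w₁j}·u)`. -/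
noncomputable def Hnum (q w1 : ℝ) (u : ℂ) (l : ℕ) : ℂ :=
  (1 - u) * (((1 - q : ℝ) : ℂ)⁻¹) ^ l *
    ∑ j ∈ range (l + 1), (l.choose j : ℂ) * (-1) ^ j
      / (1 - ((q ^ (w1 * (j : ℝ)) : ℝ) : ℂ) * u)

theorem one_sub_pow_eq_sum {R : Type*} [CommRing R] (x : R) (l : ℕ) :
    (1 - x) ^ l = ∑ j ∈ range (l + 1), (l.choose j : R) * (-1) ^ j * x ^ j := by
  rw [sub_eq_neg_add, add_pow]
  refine sum_congr rfl fun j _ => ?_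
  rw [one_pow, neg_pow]
  ring

theorem hasSum_pow_mul_one_sub_pow_pow {𝕜 : Type*} [NormedField 𝕜]
    {r u : 𝕜} (hr : ‖r‖ ≤ 1) (hu : ‖u‖ < 1) (l : ℕ) :
    HasSum (fun m : ℕ => u ^ m * (1 - r ^ m) ^ l)
      (∑ j ∈ range (l + 1), (l.choose j : 𝕜) * (-1) ^ j / (1 - r ^ j * u)) := by
  have hgeom (j : ℕ) : HasSum (fun m : ℕ => (r ^ j * u) ^ m) (1 - r ^ j * u)⁻¹ := by
    refine hasSum_geometric_of_norm_lt_one ?_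
    calc ‖r ^ j * u‖ = ‖r‖ ^ j * ‖u‖ := by rw [norm_mul, norm_pow]
      _ ≤ ‖u‖ := mul_le_of_le_one_left (norm_nonneg u) (pow_le_one₀ (norm_nonneg r) hr)
      _ < 1 := hu
  have hterm (m : ℕ) : u ^ m * (1 - r ^ m) ^ l
      = ∑ j ∈ range (l + 1), (l.choose j : 𝕜) * (-1) ^ j * (r ^ j * u) ^ m := by
    simp only [one_sub_pow_eq_sum, mul_sum, mul_pow, ← pow_mul, mul_comm m]
    exact sum_congr rfl fun j _ => by ring
  simp only [hterm, div_eq_mul_inv]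
  exact hasSum_sum fun j _ => (hgeom j).mul_left _

theorem qn_add {q : ℝ} (hq : 0 < q) (a b : ℝ) : qn q (a + b) = qn q a + q ^ a * qn q b := by
  simp only [qn, Real.rpow_add hq]
  ring

theorem qn_add_pow {q : ℝ} (hq : 0 < q) (a b : ℝ) (n : ℕ) :
    qn q (a + b) ^ n
      = ∑ l ∈ range (n + 1), (n.choose l : ℝ) * qn q a ^ (n - l) * q ^ (a * l) * qn q b ^ l := by
  rw [qn_add hq, add_comm, add_pow]
  refine sum_congr rfl fun l _ => ?_
  rw [Real.rpow_mul_natCast hq.le, mul_pow]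
  ring

theorem hasSum_Hnum {q w1 : ℝ} (hq0 : 0 < q) (hq1 : q ≤ 1) (hw1 : 0 ≤ w1) {u : ℂ} (hu : ‖u‖ < 1)
    (l : ℕ) :
    HasSum (fun m : ℕ => (1 - u) * (u ^ m * ((qn q (w1 * m) ^ l : ℝ) : ℂ))) (Hnum q w1 u l) := by
  set r : ℂ := ((q ^ w1 : ℝ) : ℂ)
  have hr : ‖r‖ ≤ 1 := by
    rw [Complex.norm_real, Real.norm_of_nonneg (by positivity)]
    exact Real.rpow_le_one hq0.le hq1 hw1
  have hqn (m : ℕ) : ((qn q (w1 * m) : ℝ) : ℂ) = ((1 - q : ℝ) : ℂ)⁻¹ * (1 - r ^ m) := by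
    simp only [qn, Real.rpow_mul_natCast hq0.le, r]
    push_cast
    ring
  have hpow (j : ℕ) : ((q ^ (w1 * (j : ℝ)) : ℝ) : ℂ) = r ^ j := by
    simp only [Real.rpow_mul_natCast hq0.le, r, Complex.ofReal_pow]
  have hterm (m : ℕ) : (1 - u) * (u ^ m * ((qn q (w1 * m) ^ l : ℝ) : ℂ))
      = (1 - u) * ((1 - q : ℝ) : ℂ)⁻¹ ^ l * (u ^ m * (1 - r ^ m) ^ l) := by
    rw [Complex.ofReal_pow, hqn, mul_pow]
    ring
  simp only [hterm, Hnum, hpow]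
  exact (hasSum_pow_mul_one_sub_pow_pow hr hu l).mul_left _

theorem daehee_qEuler_polynomial_expansion_general (q w w1 : ℝ) (hq0 : 0 < q) (hq1 : q < 1)
    (hw1 : 0 < w1) (u : ℂ) (hu : ‖u‖ < 1) (n : ℕ) :
    (1 - u) * ∑' m : ℕ, u ^ m * ((qn q (w + w1 * (m : ℝ)) ^ n : ℝ) : ℂ)
      = ∑ l ∈ range (n + 1), (n.choose l : ℂ) * ((qn q w ^ (n - l) : ℝ) : ℂ)
          * ((q ^ (w * (l : ℝ)) : ℝ) : ℂ) * Hnum q w1 u l := by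
  have hterm (m : ℕ) : (1 - u) * (u ^ m * ((qn q (w + w1 * m) ^ n : ℝ) : ℂ))
      = ∑ l ∈ range (n + 1), (n.choose l : ℂ) * ((qn q w ^ (n - l) : ℝ) : ℂ)
          * ((q ^ (w * (l : ℝ)) : ℝ) : ℂ)
          * ((1 - u) * (u ^ m * ((qn q (w1 * m) ^ l : ℝ) : ℂ))) := by
    rw [qn_add_pow hq0, Complex.ofReal_sum, mul_sum, mul_sum]
    refine sum_congr rfl fun l _ => ?_
    push_cast
    ring
  rw [← tsum_mul_left]
  simp only [hterm]
  exact (hasSum_sum fun l _ => (hasSum_Hnum hq0 hq1.le hw1.le hu l).mul_left _).tsum_eq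

/-- The Euler–Barnes type Daehee q-Euler polynomial
`H_n(u⁻¹,w:q|w₁) = (1-u)·Σ_{m≥0} u^m·[w+w₁m]_q^n` satisfies
`H_n(u⁻¹,w:q|w₁) = Σ_{l=0}^{n} C(n,l)·[w]_q^{n-l}·q^{w·l}·H_l(u⁻¹:q|w₁)`. -/
theorem daehee_qEuler_polynomial_expansion (q w w1 : ℝ) (hq0 : 0 < q) (hq1 : q < 1)
    (hw : 0 ≤ w) (hw1 : 0 < w1) (u : ℂ) (hu : ‖u‖ < 1) (n : ℕ) :
    (1 - u) * ∑' m : ℕ, u ^ m * ((qn q (w + w1 * (m : ℝ)) ^ n : ℝ) : ℂ)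
      = ∑ l ∈ range (n + 1), (n.choose l : ℂ) * ((qn q w ^ (n - l) : ℝ) : ℂ)
          * ((q ^ (w * (l : ℝ)) : ℝ) : ℂ) * Hnum q w1 u l :=
  daehee_qEuler_polynomial_expansion_general q w w1 hq0 hq1 hw1 u hu n
end
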